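/- arXiv:1112.0245 — 5 statements merged into one kernel-verified Lean document; each statement's English description precedes it below -/
import Mathlib

section
/- Let L be a finite set with at least two elements and let φ be a permutation of L. Then there exists a circular order of L that φ preserves (i.e., there exists a permutation σ of L that is a single cycle with support all of L such that φ commutes with σ) if and only if all permutation cycles of φ have the same length, where each fixed point of φ is regarded as a cycle of length 1. -/
/-!
If a full cycle `σ` commutes with `φ`, so does every power of `σ`, and these powers carry any
point to any other while preserving `φ`-periods; hence the period is constant.

Conversely, a permutation all of whose points have period `d` is, after relabelling, the shift
`(i, q) ↦ (i + 1, q)` on `ZMod d × {cycles}`, so two such permutations of the same finite set are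
conjugate. Thus, if `d` is the common period of `φ` and `n = |L|`, then `φ` is conjugate, by
some `c`, to `σ₀ ^ (n / d)` for any full cycle `σ₀`, and `c σ₀ c⁻¹` is a full cycle commuting
with `φ`.
-/

open Function Finset

namespace Equiv.Perm

variable {α : Type*}

theorem minimalPeriod_eq_of_commute_of_sameCycle {φ σ : Perm α} (h : Commute φ σ) {x y : α}
    (hxy : σ.SameCycle x y) : minimalPeriod φ x = minimalPeriod φ y := by
  obtain ⟨k, rfl⟩ := hxy
  refine minimalPeriod_eq_minimalPeriod_iff.mpr fun n => ?_
  simp only [IsPeriodicPt, IsFixedPt, ← coe_pow]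
  rw [← mul_apply, ((h.pow_left n).zpow_right k).eq, mul_apply, EmbeddingLike.apply_eq_iff_eq]

theorem isPeriodicPt_orderOf (φ : Perm α) (x : α) : IsPeriodicPt φ (orderOf φ) x := by
  rw [IsPeriodicPt, IsFixedPt, ← coe_pow, pow_orderOf_eq_one, one_apply]

theorem minimalPeriod_pos [Finite α] (φ : Perm α) (x : α) : 0 < minimalPeriod φ x :=
  (isPeriodicPt_orderOf φ x).minimalPeriod_pos (orderOf_pos φ)

theorem IsCycle.minimalPeriod_eq_card_support [Fintype α] [DecidableEq α] {σ : Perm α}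
    (hσ : σ.IsCycle) {x : α} (hx : σ x ≠ x) : minimalPeriod σ x = #σ.support := by
  rw [← hσ.orderOf]
  exact Nat.dvd_antisymm (isPeriodicPt_orderOf σ x).minimalPeriod_dvd
    (orderOf_dvd_of_pow_eq_one <| (hσ.pow_eq_one_iff' hx).mpr iterate_minimalPeriod)

theorem IsCycle.minimalPeriod_pow [Fintype α] [DecidableEq α] {σ : Perm α} (hσ : σ.IsCycle)
    (hs : σ.support = univ) {m : ℕ} (hm : m ∣ Fintype.card α) (hm₀ : m ≠ 0) (x : α) :
    minimalPeriod ⇑(σ ^ m) x = Fintype.card α / m := by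
  have hx : σ x ≠ x := mem_support.mp (hs ▸ mem_univ x)
  rw [coe_pow, minimalPeriod_iterate_eq_div_gcd hm₀, hσ.minimalPeriod_eq_card_support hx, hs,
    card_univ, Nat.gcd_eq_right hm]

theorem exists_isCycle_support_eq_univ [Fintype α] [DecidableEq α] (h : 2 ≤ Fintype.card α) :
    ∃ σ : Perm α, σ.IsCycle ∧ σ.support = univ := by
  have hl : (univ : Finset α).toList.Nodup := Finset.nodup_toList _
  refine ⟨(univ : Finset α).toList.formPerm, List.isCycle_formPerm hl (by simpa using h), ?_⟩
  rw [List.support_formPerm_of_nodup _ hl, toList_toFinset]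
  intro x hx
  have := congrArg List.length hx
  rw [Finset.length_toList, card_univ, List.length_singleton] at this
  omega

theorem exists_equiv_zmod_prod_quotient_sameCycle [Finite α] {φ : Perm α} {d : ℕ} [NeZero d]
    (hφ : ∀ x, minimalPeriod φ x = d) :
    ∃ e : ZMod d × Quotient (SameCycle.setoid φ) ≃ α, ∀ i q, e (i + 1, q) = φ (e (i, q)) := by
  let f : ZMod d × Quotient (SameCycle.setoid φ) → α := fun p => (φ ^ p.1.val) p.2.out
  have hf : ∀ (k : ℕ) q, f (k, q) = (φ ^ k) q.out := fun k q => by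
    change φ^[(k : ZMod d).val] q.out = φ^[k] q.out
    rw [ZMod.val_natCast, ← hφ q.out, iterate_mod_minimalPeriod_eq]
  have hinj : Injective f := by
    rintro ⟨i, q⟩ ⟨j, r⟩ hij
    have hqr : q = r := Quotient.out_equiv_out.mp <| sameCycle_pow_left.mp <|
      sameCycle_pow_right.mp <| (hij : (φ ^ i.val) q.out = (φ ^ j.val) r.out).sameCycle φ
    subst hqr
    have hlt : ∀ k : ZMod d, k.val < minimalPeriod φ q.out := fun k => hφ q.out ▸ k.val_lt
    rw [Prod.mk.injEq, (ZMod.val_injective d).eq_iff.symm]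
    exact ⟨(iterate_eq_iterate_iff_of_lt_minimalPeriod (hlt i) (hlt j)).mp hij, rfl⟩
  have hsurj : Surjective f := fun x => by
    obtain ⟨k, -, hk⟩ := (Quotient.mk_out (s := SameCycle.setoid φ) x).exists_pow_eq'
    exact ⟨(k, ⟦x⟧), (hf k _).trans hk⟩
  have hbij : Bijective f := ⟨hinj, hsurj⟩
  refine ⟨Equiv.ofBijective f hbij, fun i q => ?_⟩
  have hi : i + 1 = ((i.val + 1 : ℕ) : ZMod d) := by simp
  change f (i + 1, q) = φ (f (i, q))
  rw [hi, hf, pow_succ', mul_apply]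

theorem card_eq_mul_card_quotient_sameCycle [Finite α] {φ : Perm α} {d : ℕ} [NeZero d]
    (hφ : ∀ x, minimalPeriod φ x = d) :
    Nat.card α = d * Nat.card (Quotient (SameCycle.setoid φ)) := by
  obtain ⟨e, -⟩ := exists_equiv_zmod_prod_quotient_sameCycle hφ
  rw [← Nat.card_congr e, Nat.card_prod, Nat.card_zmod]

theorem isConj_of_forall_minimalPeriod_eq [Finite α] {φ ψ : Perm α} {d : ℕ} [NeZero d]
    (hφ : ∀ x, minimalPeriod φ x = d) (hψ : ∀ x, minimalPeriod ψ x = d) : IsConj φ ψ := by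
  obtain ⟨eφ, heφ⟩ := exists_equiv_zmod_prod_quotient_sameCycle hφ
  obtain ⟨eψ, heψ⟩ := exists_equiv_zmod_prod_quotient_sameCycle hψ
  have hcard := (card_eq_mul_card_quotient_sameCycle hφ).symm.trans
    (card_eq_mul_card_quotient_sameCycle hψ)
  obtain ⟨eQ⟩ := Finite.card_eq.mp (Nat.eq_of_mul_eq_mul_left (NeZero.pos d) hcard)
  let c : Perm α := (eφ.symm.trans ((Equiv.refl _).prodCongr eQ)).trans eψ
  refine isConj_iff.mpr ⟨c, mul_inv_eq_of_eq_mul <| Equiv.ext fun x => ?_⟩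
  obtain ⟨⟨i, q⟩, rfl⟩ := eφ.surjective x
  simp [c, ← heφ, heψ]

theorem isConj_pow_of_isCycle_of_support_eq_univ [Fintype α] [DecidableEq α] {φ σ : Perm α}
    (hσ : σ.IsCycle) (hs : σ.support = univ) {d : ℕ} [NeZero d]
    (hφ : ∀ x, minimalPeriod φ x = d) : IsConj φ (σ ^ (Fintype.card α / d)) := by
  have hd : d ∣ Fintype.card α :=
    ⟨_, Nat.card_eq_fintype_card (α := α) ▸ card_eq_mul_card_quotient_sameCycle hφ⟩
  have hcard : Fintype.card α ≠ 0 := by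
    have := hσ.two_le_card_support
    rw [hs, card_univ] at this
    omega
  have hquot : Fintype.card α / d ≠ 0 :=
    (Nat.div_ne_zero_iff_of_dvd hd).mpr ⟨hcard, NeZero.ne d⟩
  refine isConj_of_forall_minimalPeriod_eq hφ fun x => ?_
  rw [hσ.minimalPeriod_pow hs (Nat.div_dvd_of_dvd hd) hquot x, Nat.div_div_self hd hcard]

end Equiv.Perm

open Equiv.Perm

/-- A permutation `φ` of a finite set `L` with at least two elements
preserves some circular order of `L` (encoded by a successor permutation `σ`, a single
cycle whose support is all of `L`, with `φ` commuting with `σ`) if and only if all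
permutation cycles of `φ` have the same length (fixed points counting as cycles of
length 1, so the cycle length of `x` is the minimal period of `x` under `φ`). -/
theorem stmt_4 {L : Type*} [Fintype L] [DecidableEq L]
    (hL : 2 ≤ Fintype.card L) (φ : Equiv.Perm L) :
    (∃ σ : Equiv.Perm L, σ.IsCycle ∧ σ.support = Finset.univ ∧ φ * σ = σ * φ) ↔
      ∀ x y : L, Function.minimalPeriod φ x = Function.minimalPeriod φ y := by
  constructor
  · rintro ⟨σ, hσ, hs, hcomm⟩ x y
    have hmoves : ∀ z, σ z ≠ z := fun z => mem_support.mp (hs ▸ mem_univ z)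
    exact minimalPeriod_eq_of_commute_of_sameCycle hcomm (hσ.sameCycle (hmoves x) (hmoves y))
  · intro h
    obtain ⟨x₀⟩ : Nonempty L := Fintype.card_pos_iff.mp (by omega)
    have : NeZero (minimalPeriod φ x₀) := ⟨(minimalPeriod_pos φ x₀).ne'⟩
    obtain ⟨σ, hσ, hs⟩ := exists_isCycle_support_eq_univ hL
    obtain ⟨c, hc⟩ := isConj_iff.mp
      (isConj_pow_of_isCycle_of_support_eq_univ hσ hs fun x => h x x₀).symm
    refine ⟨c * σ * c⁻¹, hσ.conj, by rw [support_conj, hs, map_univ_equiv], ?_⟩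
    rw [← hc]
    exact ((Commute.refl σ).pow_left _).map (MulAut.conj c)
end

section
/- Let L be a finite set with at least two elements and let φ be a permutation of L. Then there exists a circular order of L that φ reverses (i.e., there exists a permutation σ of L that is a single cycle with support all of L such that φ ∘ σ ∘ φ⁻¹ = σ⁻¹) if and only if all permutation cycles of φ have length 2, except for at most two cycles of length 1; equivalently, if and only if φ ∘ φ is the identity and φ has at most two fixed points. -/
/-!
Any two cycles with full support are conjugate, so we may take the circular order to be the
rotation `x ↦ 1 + x` of `ZMod n`. A permutation reversing it satisfies `φ (1 + x) = φ x - 1`,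
hence is a reflection `x ↦ a - x`: an involution whose fixed points are the solutions of
`2 • x = a`, of which a cyclic group has at most two. Conversely, involutions are classified
up to conjugacy by their number of fixed points, which has the parity of `n`, and reflections
realise every such number `≤ 2`.
-/

open Equiv Equiv.Perm Finset

namespace Equiv.Perm

variable {α β : Type*}

theorem IsCycle.permCongr {σ : Perm α} (hσ : σ.IsCycle) (e : α ≃ β) :
    (e.permCongr σ).IsCycle := by
  obtain ⟨x, hx, hσx⟩ := hσ
  refine ⟨e x, by simpa using hx, fun y hy => ?_⟩
  obtain ⟨k, hk⟩ := hσx (y := e.symm y) (by simpa [← e.eq_symm_apply] using hy)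
  refine ⟨k, ?_⟩
  rw [← permCongrHom_coe, ← map_zpow, permCongrHom_coe, permCongr_apply, symm_apply_apply, hk,
    apply_symm_apply]

theorem permCongr_sq_eq_one_iff (e : α ≃ β) (σ : Perm α) :
    e.permCongr σ ^ 2 = 1 ↔ σ ^ 2 = 1 := by
  rw [← permCongrHom_coe, ← map_pow, map_eq_one_iff _ e.permCongrHom.injective]

variable [Fintype α] [DecidableEq α] [Fintype β] [DecidableEq β]

def ReversesCircularOrder (φ : Perm α) : Prop :=
  ∃ σ : Perm α, σ.IsCycle ∧ σ.support = univ ∧ φ * σ * φ⁻¹ = σ⁻¹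

theorem support_permCongr (e : α ≃ β) (σ : Perm α) :
    (e.permCongr σ).support = σ.support.map e.toEmbedding := by
  ext y
  simp [mem_support, e.eq_symm_apply]

theorem card_compl_support_permCongr (e : α ≃ β) (σ : Perm α) :
    #(e.permCongr σ).supportᶜ = #σ.supportᶜ := by
  rw [card_compl, card_compl, support_permCongr, card_map, Fintype.card_congr e]

theorem ReversesCircularOrder.permCongr {φ : Perm α} (h : φ.ReversesCircularOrder)
    (e : α ≃ β) : (e.permCongr φ).ReversesCircularOrder := by
  obtain ⟨σ, hσ, hsupp, hrev⟩ := h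
  refine ⟨e.permCongr σ, hσ.permCongr e, by simp [support_permCongr, hsupp], ?_⟩
  simp only [← permCongrHom_coe, ← map_inv, ← map_mul, hrev]

theorem reversesCircularOrder_permCongr_iff (e : α ≃ β) (φ : Perm α) :
    (e.permCongr φ).ReversesCircularOrder ↔ φ.ReversesCircularOrder :=
  ⟨fun h => by simpa only [← permCongr_symm, symm_apply_apply] using h.permCongr e.symm,
    fun h => h.permCongr e⟩

theorem isConj_of_sq_eq_one {ψ₁ ψ₂ : Perm α} (h₁ : ψ₁ ^ 2 = 1) (h₂ : ψ₂ ^ 2 = 1)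
    (h : #ψ₁.supportᶜ = #ψ₂.supportᶜ) : IsConj ψ₁ ψ₂ := by
  have hsupp : #ψ₁.support = #ψ₂.support := by
    rw [card_compl, card_compl] at h
    have := card_le_univ ψ₁.support
    have := card_le_univ ψ₂.support
    omega
  have hsum₁ := sum_cycleType ψ₁
  have hsum₂ := sum_cycleType ψ₂
  rw [cycleType_of_pow_prime_eq_one h₁, Multiset.sum_replicate, smul_eq_mul] at hsum₁
  rw [cycleType_of_pow_prime_eq_one h₂, Multiset.sum_replicate, smul_eq_mul] at hsum₂
  rw [isConj_iff_cycleType_eq, cycleType_of_pow_prime_eq_one h₁,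
    cycleType_of_pow_prime_eq_one h₂]
  congr 1
  omega

end Equiv.Perm

namespace Equiv

variable {G : Type*} [AddCommGroup G]

theorem support_addLeft [Fintype G] [DecidableEq G] {g : G} (hg : g ≠ 0) :
    (Equiv.addLeft g).support = univ := by
  ext x
  simp [hg]

theorem subLeft_sq (a : G) : (Equiv.subLeft a : Perm G) ^ 2 = 1 := by
  ext x
  simp [sq]

theorem subLeft_mul_addLeft_mul_inv (a g : G) :
    Equiv.subLeft a * Equiv.addLeft g * (Equiv.subLeft a)⁻¹ = (Equiv.addLeft g)⁻¹ := by
  ext x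
  simp only [Perm.mul_apply, Perm.inv_def, symm_subLeft, subLeft_apply, coe_addLeft,
    addLeft_symm]
  abel

theorem card_compl_support_subLeft_le_two [Fintype G] [DecidableEq G] [IsAddCyclic G]
    (a : G) : #(Perm.support (Equiv.subLeft a))ᶜ ≤ 2 := by
  have hfix : ∀ x, x ∈ (Perm.support (Equiv.subLeft a))ᶜ ↔ 2 • x = a := by
    intro x
    rw [mem_compl, mem_support, not_not, subLeft_apply, sub_eq_iff_eq_add, two_nsmul, eq_comm]
  obtain hempty | ⟨x₀, hx₀⟩ := (Perm.support (Equiv.subLeft a))ᶜ.eq_empty_or_nonempty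
  · simp [hempty]
  calc #(Perm.support (Equiv.subLeft a))ᶜ ≤ #{z : G | 2 • z = 0} := by
        refine card_le_card_of_injOn (· - x₀) (fun x hx => ?_) sub_left_injective.injOn
        simp only [coe_filter, mem_univ, true_and, Set.mem_ofPred_eq, smul_sub,
          (hfix x).1 hx, (hfix x₀).1 hx₀, sub_self]
    _ ≤ 2 := IsAddCyclic.card_nsmul_eq_zero_le two_pos

end Equiv

namespace ZMod

variable {n : ℕ} [NeZero n]

theorem isCycle_addLeft_one [Nontrivial (ZMod n)] : (Equiv.addLeft (1 : ZMod n)).IsCycle :=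
  ⟨0, by simp, fun y _ => ⟨y.val, by simp⟩⟩

theorem eq_subLeft_of_mul_addLeft_one_mul_inv {φ : Perm (ZMod n)}
    (h : φ * Equiv.addLeft 1 * φ⁻¹ = (Equiv.addLeft 1)⁻¹) : φ = Equiv.subLeft (φ 0) := by
  have hstep : ∀ x, φ (1 + x) = φ x - 1 := by
    intro x
    simpa [neg_add_eq_sub] using congrArg (· (φ x)) h
  have hnat : ∀ k : ℕ, φ k = φ 0 - k := by
    intro k
    induction k with
    | zero => simp
    | succ k ih => rw [Nat.cast_succ, add_comm, hstep, ih]; ring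
  ext x
  rw [subLeft_apply, ← natCast_zmod_val x, hnat]

theorem card_compl_support_modEq_two {ψ : Perm (ZMod n)} (h : ψ ^ 2 = 1) :
    #ψ.supportᶜ ≡ n [MOD 2] := by
  have := card_compl_support_modEq (p := 2) (n := 1) (by rwa [pow_one])
  rwa [ZMod.card] at this

theorem exists_card_compl_support_subLeft_eq {f : ℕ} (hf : f ≤ 2) (hpar : f ≡ n [MOD 2]) :
    ∃ a : ZMod n, #(Perm.support (Equiv.subLeft a))ᶜ = f := by
  have hparity (a : ZMod n) := card_compl_support_modEq_two (subLeft_sq a)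
  have hbound (a : ZMod n) := card_compl_support_subLeft_le_two a
  unfold Nat.ModEq at hparity hpar
  interval_cases f
  · refine ⟨1, ?_⟩
    rw [card_eq_zero, eq_empty_iff_forall_notMem]
    intro x hx
    have h2 : 2 ∣ n := by omega
    have hx : 1 = x + x := by simpa [mem_support, sub_eq_iff_eq_add] using hx
    have hmod2 : ∀ y : ZMod 2, 1 ≠ y + y := by decide
    have := congrArg (ZMod.castHom h2 (ZMod 2)) hx
    rw [map_one, map_add] at this
    exact hmod2 _ this
  · have := hparity 0
    have := hbound 0
    exact ⟨0, by omega⟩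
  · have : 0 < #(Perm.support (Equiv.subLeft (0 : ZMod n)))ᶜ :=
      card_pos.mpr ⟨0, by simp [mem_support]⟩
    have := hparity 0
    have := hbound 0
    exact ⟨0, by omega⟩

theorem reversesCircularOrder_iff [Nontrivial (ZMod n)] (φ : Perm (ZMod n)) :
    φ.ReversesCircularOrder ↔ φ ^ 2 = 1 ∧ #φ.supportᶜ ≤ 2 := by
  have hrot : (Equiv.addLeft (1 : ZMod n)).support = univ := support_addLeft one_ne_zero
  constructor
  · rintro ⟨σ, hσ, hsupp, hrev⟩
    obtain ⟨c, rfl⟩ := isConj_iff.mp <| isCycle_addLeft_one.isConj hσ (by rw [hrot, hsupp])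
    obtain ⟨ψ, rfl⟩ := c.permCongr.surjective φ
    have hψ : ψ * Equiv.addLeft 1 * ψ⁻¹ = (Equiv.addLeft 1)⁻¹ := by
      simp only [← permCongr_eq_mul, ← permCongrHom_coe, ← map_inv, ← map_mul] at hrev
      exact c.permCongrHom.injective hrev
    rw [permCongr_sq_eq_one_iff, card_compl_support_permCongr,
      eq_subLeft_of_mul_addLeft_one_mul_inv hψ]
    exact ⟨subLeft_sq _, card_compl_support_subLeft_le_two _⟩
  · rintro ⟨hsq, hfix⟩
    obtain ⟨a, ha⟩ :=
      exists_card_compl_support_subLeft_eq hfix (card_compl_support_modEq_two hsq)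
    obtain ⟨c, rfl⟩ := isConj_iff.mp (isConj_of_sq_eq_one (subLeft_sq a) hsq ha)
    rw [← permCongr_eq_mul, reversesCircularOrder_permCongr_iff]
    exact ⟨Equiv.addLeft 1, isCycle_addLeft_one, hrot, subLeft_mul_addLeft_mul_inv a 1⟩

end ZMod

/-- A permutation `φ` of a finite set `L` with at least two elements
reverses some circular order of `L` (encoded by a successor permutation `σ`, a single
cycle whose support is all of `L`, with `φ * σ * φ⁻¹ = σ⁻¹`) if and only if all
permutation cycles of `φ` have length 2 except for at most two cycles of length 1,
i.e., if and only if `φ ∘ φ` is the identity and `φ` has at most two fixed points. -/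
theorem stmt_5 {L : Type*} [Fintype L] [DecidableEq L]
    (hL : 2 ≤ Fintype.card L) (φ : Equiv.Perm L) :
    (∃ σ : Equiv.Perm L, σ.IsCycle ∧ σ.support = Finset.univ ∧ φ * σ * φ⁻¹ = σ⁻¹) ↔
      (φ * φ = 1 ∧ (Finset.univ.filter fun x : L => φ x = x).card ≤ 2) := by
  have : Fact (1 < Fintype.card L) := ⟨hL⟩
  let e : ZMod (Fintype.card L) ≃ L := Fintype.equivOfCardEq (by simp)
  obtain ⟨ψ, rfl⟩ := e.permCongr.surjective φ
  have hfix : (univ.filter fun x : L => e.permCongr ψ x = x) = (e.permCongr ψ).supportᶜ := by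
    ext x
    simp only [mem_filter, mem_univ, true_and, mem_compl, mem_support, not_not]
  rw [hfix, ← sq, card_compl_support_permCongr, permCongr_sq_eq_one_iff]
  exact (reversesCircularOrder_permCongr_iff e ψ).trans (ZMod.reversesCircularOrder_iff ψ)
end

section
/- Let L be a finite set with at least two elements, let σ be a permutation of L that is a single cycle with support all of L, and let φ be a permutation of L with φ ∘ σ ∘ φ⁻¹ = σ⁻¹. Then φ has at most two fixed points. -/
/-- If `σ` is a permutation of a finite set `L` with at least two elements
that is a single cycle with support all of `L`, and `φ` is a permutation of `L` with
`φ * σ * φ⁻¹ = σ⁻¹`, then `φ` has at most two fixed points. -/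
theorem stmt_7 {L : Type*} [Fintype L] [DecidableEq L]
    (hL : 2 ≤ Fintype.card L) (σ φ : Equiv.Perm L)
    (hcyc : σ.IsCycle) (hsupp : σ.support = Finset.univ)
    (hrev : φ * σ * φ⁻¹ = σ⁻¹) :
    (Finset.univ.filter fun x : L => φ x = x).card ≤ 2 := by
  set S := Finset.univ.filter fun x : L => φ x = x with hS
  rcases S.eq_empty_or_nonempty with h | ⟨x, hx⟩
  · simp [h]
  have hmove : ∀ z : L, σ z ≠ z := by
    intro z
    have : z ∈ σ.support := by rw [hsupp]; exact Finset.mem_univ z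
    exact Equiv.Perm.mem_support.mp this
  have hφx : φ x = x := (Finset.mem_filter.mp hx).2
  have hconj : ∀ k : ℤ, φ * σ ^ k * φ⁻¹ = σ ^ (-k) := by
    intro k
    have : (MulAut.conj φ) σ = σ⁻¹ := hrev
    calc φ * σ ^ k * φ⁻¹ = (MulAut.conj φ) (σ ^ k) := rfl
      _ = ((MulAut.conj φ) σ) ^ k := map_zpow _ _ _
      _ = (σ⁻¹) ^ k := by rw [this]
      _ = σ ^ (-k) := by rw [inv_zpow, zpow_neg]
  have key : ∀ k : ℤ, φ ((σ ^ k) x) = (σ ^ (-k)) x := by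
    intro k
    have := congrArg (fun (π : Equiv.Perm L) => π x) (hconj k)
    simp only [Equiv.Perm.mul_apply] at this
    have hφinv : φ⁻¹ x = x := by
      apply φ.injective; simp [hφx]
    rwa [hφinv] at this
  have hord : orderOf σ = Fintype.card L := by
    rw [hcyc.orderOf, hsupp, Finset.card_univ]
  set n := Fintype.card L with hn
  -- every fixed point lies in {x, σ^(n/2) x}
  have hsub : S ⊆ {x, (σ ^ (n / 2)) x} := by
    intro y hy
    have hφy : φ y = y := (Finset.mem_filter.mp hy).2
    obtain ⟨k, hk⟩ := hcyc.exists_zpow_eq (hmove x) (hmove y)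
    have h2k : (σ ^ (2 * k)) x = x := by
      have h1 : (σ ^ (-k)) x = (σ ^ k) x := by
        rw [← key k, hk, hφy]
      have := congrArg (σ ^ k) h1
      rwa [← Equiv.Perm.mul_apply, ← Equiv.Perm.mul_apply, ← zpow_add, ← zpow_add,
        add_neg_cancel, zpow_zero, Equiv.Perm.one_apply, add_comm, ← two_mul, eq_comm] at this
    have hdvd : (n : ℤ) ∣ 2 * k := by
      rw [← hord]
      rw [orderOf_dvd_iff_zpow_eq_one]
      -- σ ^ (2k) = 1 since it fixes x and σ is a cycle
      rcases (2 * k).eq_nat_or_neg with ⟨m, hm | hm⟩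
      · rw [hm] at h2k ⊢
        rw [zpow_natCast] at h2k ⊢
        exact (hcyc.pow_eq_one_iff' (hmove x)).mpr h2k
      · rw [hm] at h2k ⊢
        rw [zpow_neg, zpow_natCast] at h2k ⊢
        have : (σ ^ m) x = x := by
          have := congrArg (σ ^ m) h2k
          rw [← Equiv.Perm.mul_apply, mul_inv_cancel, Equiv.Perm.one_apply] at this
          exact this.symm
        rw [(hcyc.pow_eq_one_iff' (hmove x)).mpr this, inv_one]
    obtain ⟨m, hm⟩ := hdvd
    have hσn : σ ^ (n : ℤ) = 1 := by
      rw [zpow_natCast, ← hord, pow_orderOf_eq_one]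
    rcases Nat.even_or_odd n with ⟨p, hp⟩ | hodd
    · -- n = 2p, k = p*m
      have hn2 : (n : ℤ) = 2 * p := by exact_mod_cast (by omega : n = 2 * p)
      have hkpm : k = (p : ℤ) * m := by
        have h2 : 2 * k = 2 * ((p : ℤ) * m) := by rw [hm, hn2]; ring
        linarith
      have hτ2 : (σ ^ (p : ℤ)) ^ (2 : ℤ) = 1 := by
        rw [← zpow_mul]
        have : (p : ℤ) * 2 = (n : ℤ) := by linarith
        rw [this, hσn]
      have hy : y = ((σ ^ (p : ℤ)) ^ m) x := by
        rw [← hk, hkpm, zpow_mul]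
      rcases Int.even_or_odd m with ⟨q, hq⟩ | ⟨q, hq⟩
      · have : (σ ^ (p : ℤ)) ^ m = 1 := by
          rw [hq, ← two_mul, zpow_mul, hτ2, one_zpow]
        rw [this] at hy
        simp only [Equiv.Perm.one_apply] at hy
        simp [hy]
      · have : (σ ^ (p : ℤ)) ^ m = σ ^ (p : ℤ) := by
          rw [hq, zpow_add, zpow_mul, hτ2, one_zpow, one_mul, zpow_one]
        rw [this] at hy
        have hp2 : n / 2 = p := by omega
        have : (σ ^ (n / 2)) x = (σ ^ (p : ℤ)) x := by
          rw [hp2, ← zpow_natCast]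
        rw [hy, ← this]
        simp
    · -- n odd forces m even, so y = x
      have hme : (2 : ℤ) ∣ m := by
        have h2 : (2 : ℤ) ∣ (n : ℤ) * m := ⟨k, by linarith [hm]⟩
        rcases (Int.prime_two.dvd_mul).mp h2 with h | h
        · exfalso
          have h2n : 2 ∣ n := by exact_mod_cast h
          obtain ⟨r, hr⟩ := hodd
          omega
        · exact h
      obtain ⟨q, hq⟩ := hme
      have hkq : k = (n : ℤ) * q := by
        have h2 : 2 * k = 2 * ((n : ℤ) * q) := by rw [hm, hq]; ring
        linarith
      have : (σ ^ k) = 1 := by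
        rw [hkq, zpow_mul, hσn, one_zpow]
      rw [this] at hk
      simp only [Equiv.Perm.one_apply] at hk
      simp [← hk]
  calc S.card ≤ ({x, (σ ^ (n / 2)) x} : Finset L).card := Finset.card_le_card hsub
    _ ≤ 2 := by
      apply le_trans (Finset.card_insert_le _ _)
      simp
end

section
/- A finite simple graph G is an interval graph if and only if there exists a linear order C₁, …, C_ℓ of all maximal cliques of G that is v-consecutive for every vertex v of G. -/
/-!
If the vertices are intervals, the intervals of a clique pairwise meet, so the largest left
endpoint lies in all of them (Helly's property on the line). A maximal clique `s` is therefore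
exactly the set of intervals through a point `p s`, which determines `s`; listing the maximal
cliques by increasing `p s`, a vertex whose interval `[a v, b v]` contains `p (C i)` and
`p (C k)` contains every `p (C j)` in between. Conversely, if the cliques containing each vertex
`v` form a block `[lo v, hi v]` of consecutive indices, these blocks are an interval
representation: two vertices are adjacent iff some maximal clique contains both, i.e. iff their
blocks share an index.
-/

/-- An interval representation of a finite simple graph: each vertex `v` gets a nonempty
closed interval `[a v, b v] ⊆ ℝ` such that two distinct vertices are adjacent iff their
intervals intersect. -/
def HasIntervalRep {V : Type*} (G : SimpleGraph V) : Prop :=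
  ∃ a b : V → ℝ, (∀ v, a v ≤ b v) ∧
    ∀ u v : V, u ≠ v →
      (G.Adj u v ↔ (Set.Icc (a u) (b u) ∩ Set.Icc (a v) (b v)).Nonempty)

/-- A maximal clique: a set of pairwise adjacent vertices not properly contained in
another clique. -/
def IsMaxClique {V : Type*} (G : SimpleGraph V) (s : Set V) : Prop :=
  G.IsClique s ∧ ∀ t : Set V, G.IsClique t → s ⊆ t → s = t

open Set

def IsIntervalRep {V α : Type*} [LinearOrder α] (G : SimpleGraph V) (a b : V → α) : Prop :=
  (∀ v, a v ≤ b v) ∧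
    ∀ u v : V, u ≠ v → (G.Adj u v ↔ (Icc (a u) (b u) ∩ Icc (a v) (b v)).Nonempty)

lemma hasIntervalRep_iff {V : Type*} {G : SimpleGraph V} :
    HasIntervalRep G ↔ ∃ a b : V → ℝ, IsIntervalRep G a b :=
  Iff.rfl

section MaxClique

variable {V : Type*} {G : SimpleGraph V}

lemma isMaxClique_iff_maximal {s : Set V} : IsMaxClique G s ↔ Maximal G.IsClique s :=
  ⟨fun h => ⟨h.1, fun _ ht hst => (h.2 _ ht hst).ge⟩,
    fun h => ⟨h.1, fun _ ht hst => hst.antisymm (h.2 ht hst)⟩⟩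

lemma exists_isMaxClique_superset [Finite V] {s : Set V} (hs : G.IsClique s) :
    ∃ t, IsMaxClique G t ∧ s ⊆ t := by
  obtain ⟨t, hst, ht⟩ := Finite.exists_le_maximal hs
  exact ⟨t, isMaxClique_iff_maximal.2 ht, hst⟩

lemma adj_iff_exists_isMaxClique [Finite V] {u v : V} (huv : u ≠ v) :
    G.Adj u v ↔ ∃ s, IsMaxClique G s ∧ u ∈ s ∧ v ∈ s := by
  refine ⟨fun h => ?_, fun ⟨s, hs, hu, hv⟩ => hs.1 hu hv huv⟩
  obtain ⟨s, hs, hsub⟩ := exists_isMaxClique_superset (G.isClique_pair.2 fun _ => h)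
  exact ⟨s, hs, hsub (mem_insert u _), hsub (mem_insert_of_mem u rfl)⟩

end MaxClique

lemma OrderEmbedding.Icc_inter_Icc_nonempty_iff {α β : Type*} [LinearOrder α] [LinearOrder β]
    (f : α ↪o β) {a₁ b₁ a₂ b₂ : α} :
    (Icc (f a₁) (f b₁) ∩ Icc (f a₂) (f b₂)).Nonempty ↔ (Icc a₁ b₁ ∩ Icc a₂ b₂).Nonempty := by
  simp only [Icc_inter_Icc, nonempty_Icc, sup_le_iff, le_inf_iff, f.le_iff_le]

lemma Set.OrdConnected.exists_eq_Icc {α : Type*} [LinearOrder α] {s : Set α}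
    (hs : s.OrdConnected) (hfin : s.Finite) (hne : s.Nonempty) : ∃ a b, s = Icc a b := by
  obtain ⟨a, ha, hmin⟩ := s.exists_min_image id hfin hne
  obtain ⟨b, hb, hmax⟩ := s.exists_max_image id hfin hne
  exact ⟨a, b, Subset.antisymm (fun x hx => ⟨hmin x hx, hmax x hx⟩) (hs.out ha hb)⟩

lemma Set.Finite.exists_strictMono_comp_eq_range {α β : Type*} [LinearOrder β] {S : Set α}
    (hS : S.Finite) {p : α → β} (hp : InjOn p S) :
    ∃ (ℓ : ℕ) (C : Fin ℓ → α), StrictMono (p ∘ C) ∧ range C = S := by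
  set T := hS.toFinset.image p
  have hT : ∀ i, ∃ s ∈ S, p s = T.orderEmbOfFin rfl i := fun i => by
    obtain ⟨s, hs, hps⟩ := Finset.mem_image.1 (T.orderEmbOfFin_mem rfl i)
    exact ⟨s, hS.mem_toFinset.1 hs, hps⟩
  choose C hCS hpC using hT
  have hpC' : p ∘ C = T.orderEmbOfFin rfl := funext hpC
  refine ⟨T.card, C, hpC' ▸ (T.orderEmbOfFin rfl).strictMono, ?_⟩
  refine (range_subset_iff.2 hCS).antisymm fun s hs => ?_
  obtain ⟨i, hi⟩ : p s ∈ range (T.orderEmbOfFin rfl) := by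
    rw [Finset.range_orderEmbOfFin]
    exact Finset.mem_coe.2 (Finset.mem_image_of_mem p (hS.mem_toFinset.2 hs))
  exact ⟨i, hp (hCS i) hs ((hpC i).trans hi)⟩

namespace IsIntervalRep

variable {V α : Type*} [LinearOrder α] {G : SimpleGraph V} {a b : V → α}

lemma comp_orderEmbedding {β : Type*} [LinearOrder β] (h : IsIntervalRep G a b) (f : α ↪o β) :
    IsIntervalRep G (f ∘ a) (f ∘ b) :=
  ⟨fun v => f.monotone (h.1 v),
    fun u v huv => (h.2 u v huv).trans f.Icc_inter_Icc_nonempty_iff.symm⟩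

lemma exists_mem_Icc_of_isClique [Nonempty α] (h : IsIntervalRep G a b) {s : Set V}
    (hfin : s.Finite) (hs : G.IsClique s) : ∃ x, ∀ v ∈ s, x ∈ Icc (a v) (b v) := by
  rcases s.eq_empty_or_nonempty with rfl | hne
  · exact ⟨Classical.arbitrary α, fun _ => False.elim⟩
  obtain ⟨w, hw, hmax⟩ := s.exists_max_image a hfin hne
  refine ⟨a w, fun v hv => ⟨hmax v hv, ?_⟩⟩
  rcases eq_or_ne w v with rfl | hwv
  · exact h.1 w
  · obtain ⟨y, ⟨hwy, -⟩, -, hyv⟩ := (h.2 w v hwv).1 (hs hw hv hwv)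
    exact hwy.trans hyv

lemma isClique_setOf_mem_Icc (h : IsIntervalRep G a b) (x : α) :
    G.IsClique {v | x ∈ Icc (a v) (b v)} :=
  fun u hu v hv huv => (h.2 u v huv).2 ⟨x, hu, hv⟩

lemma eq_setOf_mem_Icc (h : IsIntervalRep G a b) {s : Set V} (hs : IsMaxClique G s) {x : α}
    (hx : ∀ v ∈ s, x ∈ Icc (a v) (b v)) : s = {v | x ∈ Icc (a v) (b v)} :=
  hs.2 _ (h.isClique_setOf_mem_Icc x) hx

theorem exists_enum_maxCliques_ordConnected [Finite V] [Nonempty α] (h : IsIntervalRep G a b) :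
    ∃ (ℓ : ℕ) (C : Fin ℓ → Set V), Function.Injective C ∧
      range C = {s | IsMaxClique G s} ∧ ∀ v, {i | v ∈ C i}.OrdConnected := by
  have hpoint : ∀ s : Set V, ∃ x, IsMaxClique G s → ∀ v ∈ s, x ∈ Icc (a v) (b v) := fun s => by
    by_cases hs : IsMaxClique G s
    · obtain ⟨x, hx⟩ := h.exists_mem_Icc_of_isClique (toFinite s) hs.1
      exact ⟨x, fun _ => hx⟩
    · exact ⟨Classical.arbitrary α, fun hs' => absurd hs' hs⟩
  choose p hp using hpoint
  have hinj : InjOn p {s | IsMaxClique G s} := fun s hs t ht hst =>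
    (h.eq_setOf_mem_Icc hs (hp s hs)).trans (hst ▸ (h.eq_setOf_mem_Icc ht (hp t ht)).symm)
  obtain ⟨ℓ, C, hmono, hrange⟩ := (toFinite _).exists_strictMono_comp_eq_range hinj
  have hC : ∀ i, IsMaxClique G (C i) := fun i => hrange.subset (mem_range_self i)
  refine ⟨ℓ, C, hmono.injective.of_comp, hrange, fun v => ⟨fun i hi k hk j ⟨hij, hjk⟩ => ?_⟩⟩
  change v ∈ C j
  rw [h.eq_setOf_mem_Icc (hC j) (hp _ (hC j))]
  exact ⟨(hp _ (hC i) v hi).1.trans (hmono.monotone hij),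
    (hmono.monotone hjk).trans (hp _ (hC k) v hk).2⟩

end IsIntervalRep

theorem exists_isIntervalRep_of_ordConnected {V : Type*} [Finite V] {G : SimpleGraph V} {ℓ : ℕ}
    (C : Fin ℓ → Set V) (hC : range C = {s | IsMaxClique G s})
    (hcons : ∀ v, {i | v ∈ C i}.OrdConnected) : ∃ a b : V → Fin ℓ, IsIntervalRep G a b := by
  have hne : ∀ v, {i | v ∈ C i}.Nonempty := fun v => by
    obtain ⟨s, hs, hvs⟩ := exists_isMaxClique_superset (G.isClique_singleton v)
    obtain ⟨i, rfl⟩ := hC.symm.subset hs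
    exact ⟨i, hvs rfl⟩
  choose a b hab using fun v => (hcons v).exists_eq_Icc (toFinite _) (hne v)
  refine ⟨a, b, fun v => nonempty_Icc.1 (hab v ▸ hne v), fun u v huv => ?_⟩
  calc G.Adj u v ↔ ∃ i, u ∈ C i ∧ v ∈ C i := by
        rw [adj_iff_exists_isMaxClique huv]
        change (∃ s ∈ {s | IsMaxClique G s}, u ∈ s ∧ v ∈ s) ↔ _
        rw [← hC, exists_range_iff]
    _ ↔ (Icc (a u) (b u) ∩ Icc (a v) (b v)).Nonempty := by rw [← hab u, ← hab v]; rfl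

/-- Fulkerson–Gross: a finite simple graph `G` is an interval graph iff
there is a linear order `C 0, …, C (ℓ-1)` of all maximal cliques of `G` that is
`v`-consecutive for every vertex `v` (the indices of the cliques containing `v` form a
set of consecutive integers). -/
theorem stmt_8 {V : Type*} [Fintype V] (G : SimpleGraph V) :
    HasIntervalRep G ↔
      ∃ (ℓ : ℕ) (C : Fin ℓ → Set V), Function.Injective C ∧
        (∀ s : Set V, s ∈ Set.range C ↔ IsMaxClique G s) ∧
        (∀ v : V, ∀ i j k : Fin ℓ, i ≤ j → j ≤ k → v ∈ C i → v ∈ C k → v ∈ C j) := by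
  rw [hasIntervalRep_iff]
  constructor
  · rintro ⟨a, b, h⟩
    obtain ⟨ℓ, C, hinj, hrange, hcons⟩ := h.exists_enum_maxCliques_ordConnected
    exact ⟨ℓ, C, hinj, fun s => by rw [hrange]; rfl,
      fun v i j k hij hjk hi hk => (hcons v).out hi hk ⟨hij, hjk⟩⟩
  · rintro ⟨ℓ, C, -, hC, hcons⟩
    obtain ⟨a, b, h⟩ := exists_isIntervalRep_of_ordConnected C (Set.ext hC)
      fun v => ⟨fun i hi k hk j hj => hcons v i j k hj.1 hj.2 hi hk⟩
    exact ⟨_, _, h.comp_orderEmbedding ((Fin.valOrderEmb ℓ).trans Nat.castOrderEmbedding)⟩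
end

section
/- Let G be a finite simple graph with an interval representation I, and let C be a maximal clique of G. Then there exists a real number x such that for every vertex v of G, x ∈ I(v) if and only if v ∈ C. -/
/-- Given an interval representation `v ↦ [a v, b v]` of a finite simple
graph `G` and a maximal clique `C` of `G`, there is a real number `x` that lies in the
interval of `v` exactly when `v ∈ C`. -/
theorem stmt_9 {V : Type*} [Fintype V] (G : SimpleGraph V)
    (a b : V → ℝ) (hab : ∀ v, a v ≤ b v)
    (hrep : ∀ u v : V, u ≠ v →
      (G.Adj u v ↔ (Set.Icc (a u) (b u) ∩ Set.Icc (a v) (b v)).Nonempty))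
    (C : Set V) (hC : IsMaxClique G C) :
    ∃ x : ℝ, ∀ v : V, x ∈ Set.Icc (a v) (b v) ↔ v ∈ C := by
  rcases C.eq_empty_or_nonempty with hCe | hCne
  · -- C empty: then V must be empty
    have hVempty : IsEmpty V := by
      by_contra h
      rw [not_isEmpty_iff] at h
      obtain ⟨v⟩ := h
      have h1 : G.IsClique {v} := SimpleGraph.isClique_singleton v
      have := hC.2 {v} h1 (by simp [hCe])
      rw [hCe] at this
      exact absurd this.symm (by simp)
    exact ⟨0, fun v => (hVempty.false v).elim⟩
  · obtain ⟨u₀, hu₀C, hu₀max⟩ := Set.exists_max_image C a C.toFinite hCne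
    refine ⟨a u₀, fun v => ⟨?_, ?_⟩⟩
    · -- x ∈ I(v) → v ∈ C
      intro hxv
      have hmem : ∀ w ∈ C, a u₀ ∈ Set.Icc (a w) (b w) := by
        intro w hw
        refine ⟨hu₀max w hw, ?_⟩
        rcases eq_or_ne w u₀ with rfl | hne
        · exact hab w
        · have hadj := hC.1 hu₀C hw (Ne.symm hne)
          obtain ⟨y, ⟨hy1, hy2⟩, ⟨hy3, hy4⟩⟩ := (hrep u₀ w (Ne.symm hne)).mp hadj
          exact le_trans hy1 hy4
      by_contra hvC
      have hclique : G.IsClique (insert v C) := by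
        intro x hx y hy hxy
        rcases hx with rfl | hx <;> rcases hy with rfl | hy
        · exact absurd rfl hxy
        · exact (hrep x y hxy).mpr ⟨a u₀, hxv, hmem y hy⟩
        · exact (hrep x y hxy).mpr ⟨a u₀, hmem x hx, hxv⟩
        · exact hC.1 hx hy hxy
      have := hC.2 (insert v C) hclique (Set.subset_insert v C)
      exact hvC (this ▸ Set.mem_insert v C)
    · intro hv
      refine ⟨hu₀max v hv, ?_⟩
      rcases eq_or_ne v u₀ with rfl | hne
      · exact hab v
      · have hadj := hC.1 hu₀C hv (Ne.symm hne)
        obtain ⟨y, ⟨hy1, hy2⟩, ⟨hy3, hy4⟩⟩ := (hrep u₀ v (Ne.symm hne)).mp hadj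
        exact le_trans hy1 hy4
end
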